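/- arXiv:0903.1450 — 4 statements merged into one kernel-verified Lean document; each statement's English description precedes it below -/
import Mathlib

section
/- Pareto optimality of Sort-Cut: at any clearing breakpoint of the Sort-Cut mechanism with truthful reports (w_i = v_i for every bidder i), the resulting allocation {(y_i, p_i)} satisfies Σ_i y_i = m, and for every bidder i with y_i > 0 and every bidder j with v_j > v_i, p_j = b_j; consequently the Sort-Cut allocation is Pareto optimal. -/
open Finset

/-- Prefix sum of budgets: `prefixSum b j = b 1 + ⋯ + b j`. -/
noncomputable def prefixSum (b : ℕ → ℝ) (j : ℕ) : ℝ := ∑ i ∈ Finset.Icc 1 j, b i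

open scoped Classical in
/-- The cut index determined by a breakpoint `x`: the largest `k ∈ {1, …, n}` with
`b 1 + ⋯ + b (k-1) ≤ x`. -/
noncomputable def cutIndex (b : ℕ → ℝ) (n : ℕ) (x : ℝ) : ℕ :=
  Nat.findGreatest (fun k => 1 ≤ k ∧ prefixSum b (k - 1) ≤ x) n

/-- `qty w b n x t` is the number of units obtained by spending `t` dollars along the
Sort-Cut price schedule at breakpoint `x`: the first `b'_k = prefixSum b k - x` dollars buy
units at unit price `w k`, the next `b (k+1)` dollars at price `w (k+1)`, and so on through
`w n` (spending is capped at the total money the schedule accommodates).  The cumulative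
money available through segment `j` is `max (prefixSum b j - x) 0`. -/
noncomputable def qty (w b : ℕ → ℝ) (n : ℕ) (x t : ℝ) : ℝ :=
  ∑ j ∈ Finset.Icc 1 n,
    (min t (max (prefixSum b j - x) 0) - min t (max (prefixSum b (j - 1) - x) 0)) / w j

/-- The Sort-Cut demand at breakpoint `x`: each bidder `i < k` demands `qty (b i)`, and
bidder `k` demands `q' (b k - b'_k) = qty (b k) - qty (b'_k)` along the schedule with its
first segment removed. -/
noncomputable def demand (w b : ℕ → ℝ) (n : ℕ) (x : ℝ) : ℝ :=
  (∑ i ∈ Finset.Icc 1 (cutIndex b n x - 1), qty w b n x (b i)) +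
    (qty w b n x (b (cutIndex b n x)) - qty w b n x (prefixSum b (cutIndex b n x) - x))

/-- The quantity allocated to bidder `i` by the Sort-Cut mechanism at breakpoint `x`. -/
noncomputable def alloc (w b : ℕ → ℝ) (n : ℕ) (x : ℝ) (i : ℕ) : ℝ :=
  if i < cutIndex b n x then qty w b n x (b i)
  else if i = cutIndex b n x then
    qty w b n x (b i) - qty w b n x (prefixSum b (cutIndex b n x) - x)
  else 0

/-- The payment charged to bidder `i` by the Sort-Cut mechanism at breakpoint `x`:
bidders below the cut pay their whole budget, bidder `k` pays `b k - b'_k`, the rest pay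
nothing. -/
noncomputable def pay (b : ℕ → ℝ) (n : ℕ) (x : ℝ) (i : ℕ) : ℝ :=
  if i < cutIndex b n x then b i
  else if i = cutIndex b n x then b i - (prefixSum b (cutIndex b n x) - x)
  else 0

/-- A valid reported profile: at least one bidder, a positive supply `m`, positive reported
values and budgets, values sorted in nonincreasing order, and the lowest bidder can buy all
`m` units at her reported value. -/
def ValidProfile (w b : ℕ → ℝ) (n : ℕ) (m : ℝ) : Prop :=
  1 ≤ n ∧ 0 < m ∧
    (∀ i ∈ Finset.Icc 1 n, 0 < w i ∧ 0 < b i) ∧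
    (∀ i ∈ Finset.Icc 1 n, ∀ j ∈ Finset.Icc 1 n, i ≤ j → w j ≤ w i) ∧
    m * w n ≤ b n

/-- `x` is a clearing breakpoint of the Sort-Cut mechanism: demand equals supply. -/
def IsClearing (w b : ℕ → ℝ) (n : ℕ) (m x : ℝ) : Prop :=
  0 ≤ x ∧ x ≤ prefixSum b n ∧ demand w b n x = m

/-- A feasible allocation for the divisible problem: nonnegative quantities summing to at
most `m`, and payments between `0` and the corresponding budget. -/
def Feasible (n : ℕ) (m : ℝ) (b x p : ℕ → ℝ) : Prop :=
  (∀ i ∈ Finset.Icc 1 n, 0 ≤ x i ∧ 0 ≤ p i ∧ p i ≤ b i) ∧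
    ∑ i ∈ Finset.Icc 1 n, x i ≤ m

/-- `(x', p')` Pareto dominates `(x, p)` with respect to values `v`: every bidder is weakly
better off, the auctioneer's revenue is weakly larger, and at least one inequality is
strict. -/
def Dominates (n : ℕ) (v x p x' p' : ℕ → ℝ) : Prop :=
  (∀ i ∈ Finset.Icc 1 n, x i * v i - p i ≤ x' i * v i - p' i) ∧
    (∑ i ∈ Finset.Icc 1 n, p i ≤ ∑ i ∈ Finset.Icc 1 n, p' i) ∧
    ((∃ i ∈ Finset.Icc 1 n, x i * v i - p i < x' i * v i - p' i) ∨
      ∑ i ∈ Finset.Icc 1 n, p i < ∑ i ∈ Finset.Icc 1 n, p' i)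

/-- Pareto optimality of a feasible allocation: no feasible allocation dominates it. -/
def ParetoOptimal (n : ℕ) (m : ℝ) (v b x p : ℕ → ℝ) : Prop :=
  Feasible n m b x p ∧
    ¬ ∃ x' p' : ℕ → ℝ, Feasible n m b x' p' ∧ Dominates n v x p x' p'


section SortCutAux

open Finset

lemma prefixSum_zero' (b : ℕ → ℝ) : prefixSum b 0 = 0 := by simp [prefixSum]

lemma prefixSum_succ' (b : ℕ → ℝ) (j : ℕ) :
    prefixSum b (j + 1) = prefixSum b j + b (j + 1) := by
  simp [prefixSum, Finset.sum_Icc_succ_top (Nat.le_add_left 1 j)]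

lemma qty_mono' (w b : ℕ → ℝ) (n : ℕ) (x : ℝ)
    (hw : ∀ j ∈ Finset.Icc 1 n, 0 < w j)
    (hb : ∀ j ∈ Finset.Icc 1 n, 0 < b j)
    {t t' : ℝ} (h : t ≤ t') : qty w b n x t ≤ qty w b n x t' := by
  apply Finset.sum_le_sum
  intro j hj
  have hwj := hw j hj
  have h1 : 1 ≤ j := (Finset.mem_Icc.mp hj).1
  have hS : prefixSum b (j - 1) ≤ prefixSum b j := by
    have e := prefixSum_succ' b (j - 1)
    rw [Nat.sub_add_cancel h1] at e
    have := hb j hj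
    linarith
  have hnum : min t (max (prefixSum b j - x) 0) - min t (max (prefixSum b (j - 1) - x) 0)
      ≤ min t' (max (prefixSum b j - x) 0) - min t' (max (prefixSum b (j - 1) - x) 0) := by
    have hM : max (prefixSum b (j - 1) - x) 0 ≤ max (prefixSum b j - x) 0 :=
      max_le_max (by linarith) le_rfl
    set M := max (prefixSum b j - x) 0
    set N := max (prefixSum b (j - 1) - x) 0
    simp only [min_def]
    split_ifs <;> linarith
  gcongr

lemma qty_zero' (w b : ℕ → ℝ) (n : ℕ) (x : ℝ) : qty w b n x 0 = 0 := by
  apply Finset.sum_eq_zero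
  intro j hj
  rw [min_eq_left (le_max_right _ _), min_eq_left (le_max_right _ _), sub_self, zero_div]

lemma qty_nonneg' (w b : ℕ → ℝ) (n : ℕ) (x : ℝ)
    (hw : ∀ j ∈ Finset.Icc 1 n, 0 < w j)
    (hb : ∀ j ∈ Finset.Icc 1 n, 0 < b j)
    {t : ℝ} (ht : 0 ≤ t) : 0 ≤ qty w b n x t := by
  have := qty_mono' w b n x hw hb ht
  rwa [qty_zero'] at this

lemma cutIndex_facts (b : ℕ → ℝ) (n : ℕ) (x : ℝ) (hn : 1 ≤ n) (hx0 : 0 ≤ x)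
    (hxn : x ≤ prefixSum b n) :
    1 ≤ cutIndex b n x ∧ cutIndex b n x ≤ n ∧
      prefixSum b (cutIndex b n x - 1) ≤ x ∧ x ≤ prefixSum b (cutIndex b n x) := by
  classical
  unfold cutIndex
  have h1 : 1 ≤ Nat.findGreatest (fun k => 1 ≤ k ∧ prefixSum b (k - 1) ≤ x) n :=
    Nat.le_findGreatest hn ⟨le_refl 1, by simpa [prefixSum] using hx0⟩
  have h2 : Nat.findGreatest (fun k => 1 ≤ k ∧ prefixSum b (k - 1) ≤ x) n ≤ n :=
    Nat.findGreatest_le n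
  have h3 := Nat.findGreatest_of_ne_zero
      (P := fun k => 1 ≤ k ∧ prefixSum b (k - 1) ≤ x) (n := n) rfl (by omega)
  refine ⟨h1, h2, h3.2, ?_⟩
  rcases eq_or_lt_of_le h2 with he | hlt
  · rw [he]; exact hxn
  · have hng := Nat.findGreatest_is_greatest
      (P := fun k => 1 ≤ k ∧ prefixSum b (k - 1) ≤ x) (n := n)
      (k := Nat.findGreatest (fun k => 1 ≤ k ∧ prefixSum b (k - 1) ≤ x) n + 1)
      (Nat.lt_succ_self _) hlt
    have h4 : x < prefixSum b
        (Nat.findGreatest (fun k => 1 ≤ k ∧ prefixSum b (k - 1) ≤ x) n + 1 - 1) := by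
      by_contra hc
      push_neg at hc
      exact hng ⟨by omega, hc⟩
    simp only [Nat.add_sub_cancel] at h4
    linarith

/-- Sufficiency of the Pareto conditions. -/
lemma pareto_core (n : ℕ) (m : ℝ) (v b X P : ℕ → ℝ)
    (hm : 0 < m)
    (hv : ∀ i ∈ Finset.Icc 1 n, 0 < v i)
    (hXnn : ∀ i ∈ Finset.Icc 1 n, 0 ≤ X i)
    (hsum : ∑ i ∈ Finset.Icc 1 n, X i = m)
    (hfull : ∀ i ∈ Finset.Icc 1 n, ∀ j ∈ Finset.Icc 1 n, 0 < X i → v i < v j → P j = b j) :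
    ¬ ∃ x' p' : ℕ → ℝ, Feasible n m b x' p' ∧ Dominates n v X P x' p' := by
  classical
  rintro ⟨x', p', ⟨hfeas', hsum'⟩, hut, hrev, hstrict⟩
  have hne : ((Finset.Icc 1 n).filter (fun i => 0 < X i)).Nonempty := by
    obtain ⟨i, hi, hXi⟩ := Finset.exists_lt_of_sum_lt (s := Finset.Icc 1 n)
      (f := fun _ => (0 : ℝ)) (g := X) (by simp [hsum, hm])
    exact ⟨i, Finset.mem_filter.mpr ⟨hi, hXi⟩⟩
  obtain ⟨i0, hi0mem, hi0min⟩ := Finset.exists_min_image _ v hne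
  rw [Finset.mem_filter] at hi0mem
  obtain ⟨hi0, hXi0⟩ := hi0mem
  have hv0 : 0 < v i0 := hv i0 hi0
  have hmin : ∀ j ∈ Finset.Icc 1 n, 0 < X j → v i0 ≤ v j := fun j hj hXj =>
    hi0min j (Finset.mem_filter.mpr ⟨hj, hXj⟩)
  have key : ∀ j ∈ Finset.Icc 1 n, p' j - P j ≤ v i0 * (x' j - X j) := by
    intro j hj
    have hu := hut j hj
    obtain ⟨hx'0, hp'0, hp'b⟩ := hfeas' j hj
    by_cases hd : 0 ≤ x' j - X j
    · by_cases hvj : v j ≤ v i0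
      · nlinarith
      · push_neg at hvj
        have hPb : P j = b j := hfull i0 hi0 j hj hXi0 hvj
        nlinarith
    · push_neg at hd
      have hXj : 0 < X j := by linarith
      have h1 := hmin j hj hXj
      by_cases hvj : v j ≤ v i0
      · have he : v j = v i0 := le_antisymm hvj h1
        nlinarith [hu, he]
      · push_neg at hvj
        nlinarith
  have hsumle : ∑ j ∈ Finset.Icc 1 n, (p' j - P j)
      ≤ ∑ j ∈ Finset.Icc 1 n, v i0 * (x' j - X j) := Finset.sum_le_sum key
  have h2 : ∑ j ∈ Finset.Icc 1 n, v i0 * (x' j - X j)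
      = v i0 * ((∑ j ∈ Finset.Icc 1 n, x' j) - m) := by
    rw [← Finset.mul_sum, Finset.sum_sub_distrib, hsum]
  have h3 : v i0 * ((∑ j ∈ Finset.Icc 1 n, x' j) - m) ≤ 0 :=
    mul_nonpos_of_nonneg_of_nonpos hv0.le (by linarith)
  have h4 : (0 : ℝ) ≤ ∑ j ∈ Finset.Icc 1 n, (p' j - P j) := by
    rw [Finset.sum_sub_distrib]; linarith
  rcases hstrict with ⟨i, hi, hsi⟩ | hsr
  · have keyi : p' i - P i < v i0 * (x' i - X i) := by
      obtain ⟨hx'0, hp'0, hp'b⟩ := hfeas' i hi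
      by_cases hd : 0 ≤ x' i - X i
      · by_cases hvj : v i ≤ v i0
        · nlinarith
        · push_neg at hvj
          have hPb : P i = b i := hfull i0 hi0 i hi hXi0 hvj
          nlinarith
      · push_neg at hd
        have hXj : 0 < X i := by linarith
        have h1 := hmin i hi hXj
        by_cases hvj : v i ≤ v i0
        · have he : v i = v i0 := le_antisymm hvj h1
          nlinarith [hsi, he]
        · push_neg at hvj
          nlinarith
    have hlt : ∑ j ∈ Finset.Icc 1 n, (p' j - P j)
        < ∑ j ∈ Finset.Icc 1 n, v i0 * (x' j - X j) :=
      Finset.sum_lt_sum key ⟨i, hi, keyi⟩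
    linarith
  · have h5 : (0 : ℝ) < ∑ j ∈ Finset.Icc 1 n, (p' j - P j) := by
      rw [Finset.sum_sub_distrib]; linarith
    linarith

end SortCutAux

/-- Pareto optimality of Sort-Cut.  At any clearing breakpoint with
truthful reports, all `m` units are sold, every bidder of value strictly higher than some
bidder receiving a positive quantity exhausts her budget, and consequently the Sort-Cut
allocation is Pareto optimal. -/
theorem sortcut_pareto_optimal
    (n : ℕ) (m : ℝ) (v b : ℕ → ℝ) (hV : ValidProfile v b n m)
    (x : ℝ) (hx : IsClearing v b n m x) :
    (∑ i ∈ Finset.Icc 1 n, alloc v b n x i) = m ∧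
      (∀ i ∈ Finset.Icc 1 n, ∀ j ∈ Finset.Icc 1 n,
        0 < alloc v b n x i → v i < v j → pay b n x j = b j) ∧
      ParetoOptimal n m v b (alloc v b n x) (pay b n x) := by
  classical
  obtain ⟨hn, hm, hvb, hsort, hlast⟩ := hV
  obtain ⟨hx0, hxn, hclear⟩ := hx
  have hvpos : ∀ i ∈ Finset.Icc 1 n, 0 < v i := fun i hi => (hvb i hi).1
  have hbpos : ∀ i ∈ Finset.Icc 1 n, 0 < b i := fun i hi => (hvb i hi).2
  obtain ⟨hk1, hkn, hkle, hklt⟩ := cutIndex_facts b n x hn hx0 hxn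
  set k := cutIndex b n x with hkdef
  have hkmem : k ∈ Finset.Icc 1 n := Finset.mem_Icc.mpr ⟨hk1, hkn⟩
  have hSk : prefixSum b k = prefixSum b (k - 1) + b k := by
    have := prefixSum_succ' b (k - 1)
    rwa [Nat.sub_add_cancel hk1] at this
  have hbk0 : 0 ≤ prefixSum b k - x := by linarith
  have hbkb : prefixSum b k - x ≤ b k := by linarith
  -- the total allocation equals m
  have halloc_gt : ∀ i, k < i → alloc v b n x i = 0 := by
    intro i hi
    rw [alloc, ← hkdef, if_neg (by omega), if_neg (by omega)]
  have halloc_lt : ∀ i, i < k → alloc v b n x i = qty v b n x (b i) := by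
    intro i hi
    rw [alloc, ← hkdef, if_pos hi]
  have halloc_k : alloc v b n x k =
      qty v b n x (b k) - qty v b n x (prefixSum b k - x) := by
    rw [alloc, ← hkdef, if_neg (by omega), if_pos rfl]
  have hsum_alloc : (∑ i ∈ Finset.Icc 1 n, alloc v b n x i) = m := by
    have e1 : ∑ i ∈ Finset.Icc 1 n, alloc v b n x i
        = ∑ i ∈ Finset.Icc 1 k, alloc v b n x i := by
      symm
      apply Finset.sum_subset (Finset.Icc_subset_Icc_right hkn)
      intro i hi hni
      have h1 : 1 ≤ i := (Finset.mem_Icc.mp hi).1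
      have h2 : k < i := by
        by_contra hc
        exact hni (Finset.mem_Icc.mpr ⟨h1, by omega⟩)
      exact halloc_gt i h2
    obtain ⟨j, hj⟩ : ∃ j, k = j + 1 := ⟨k - 1, by omega⟩
    have e2 : ∑ i ∈ Finset.Icc 1 k, alloc v b n x i
        = (∑ i ∈ Finset.Icc 1 (k - 1), alloc v b n x i) + alloc v b n x k := by
      rw [hj, Finset.sum_Icc_succ_top (by omega)]
      simp
    have e3 : ∑ i ∈ Finset.Icc 1 (k - 1), alloc v b n x i
        = ∑ i ∈ Finset.Icc 1 (k - 1), qty v b n x (b i) := by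
      apply Finset.sum_congr rfl
      intro i hi
      exact halloc_lt i (by have := (Finset.mem_Icc.mp hi).2; omega)
    unfold demand at hclear
    rw [← hkdef] at hclear
    rw [e1, e2, e3, halloc_k]
    exact hclear
  refine ⟨hsum_alloc, ?_, ?_⟩
  · -- full-budget condition
    intro i hi j hj hai hvij
    have hji : j < i := by
      by_contra hc
      push_neg at hc
      exact absurd (hsort i hi j hj hc) (by linarith)
    have hik : i ≤ k := by
      by_contra hc
      push_neg at hc
      rw [halloc_gt i hc] at hai
      exact lt_irrefl 0 hai
    rw [pay, ← hkdef, if_pos (by omega)]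
  · -- Pareto optimality
    have hfull : ∀ i ∈ Finset.Icc 1 n, ∀ j ∈ Finset.Icc 1 n,
        0 < alloc v b n x i → v i < v j → pay b n x j = b j := by
      intro i hi j hj hai hvij
      have hji : j < i := by
        by_contra hc
        push_neg at hc
        exact absurd (hsort i hi j hj hc) (by linarith)
      have hik : i ≤ k := by
        by_contra hc
        push_neg at hc
        rw [halloc_gt i hc] at hai
        exact lt_irrefl 0 hai
      rw [pay, ← hkdef, if_pos (by omega)]
    have hallocnn : ∀ i ∈ Finset.Icc 1 n, 0 ≤ alloc v b n x i := by
      intro i hi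
      rcases lt_trichotomy i k with h | h | h
      · rw [halloc_lt i h]
        exact qty_nonneg' v b n x hvpos hbpos (hbpos i hi).le
      · rw [h, halloc_k]
        have := qty_mono' v b n x hvpos hbpos hbkb
        linarith
      · rw [halloc_gt i h]
    have hfeas : Feasible n m b (alloc v b n x) (pay b n x) := by
      refine ⟨?_, le_of_eq hsum_alloc⟩
      intro i hi
      refine ⟨hallocnn i hi, ?_, ?_⟩
      · rw [pay, ← hkdef]
        split_ifs with h1 h2
        · exact (hbpos i hi).le
        · rw [h2]; linarith
        · exact le_refl 0
      · rw [pay, ← hkdef]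
        split_ifs with h1 h2
        · exact le_refl _
        · rw [h2]; linarith
        · exact (hbpos i hi).le
    exact ⟨hfeas, pareto_core n m v b (alloc v b n x) (pay b n x) hm hvpos hallocnn
      hsum_alloc hfull⟩
end

section
/- Properties of the market clearing price: v* satisfies D_APA(p) > m for every 0 < p < v*, D_APA(p) ≤ m for every p > v*, and R* = v*·m ≤ Σ_{i : v_i ≥ v*} b_i (the ascending-price-auction revenue is at most the total budget of the bidders whose values are at least the clearing price). -/
open Finset

/-- The demand of the ascending price auction with truthful bids at price `p`:
the total budget of the bidders whose value is at least `p`, divided by `p`. -/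
noncomputable def DAPA (v b : ℕ → ℝ) (n : ℕ) (p : ℝ) : ℝ :=
  (∑ i ∈ (Finset.Icc 1 n).filter fun i => p ≤ v i, b i) / p

/-- The market clearing price of the ascending price auction with truthful bids. -/
noncomputable def vstar (v b : ℕ → ℝ) (n : ℕ) (m : ℝ) : ℝ :=
  sInf {p : ℝ | 0 < p ∧ DAPA v b n p ≤ m}

/-- properties of the market clearing price `v*`: the ascending-price
demand exceeds `m` strictly below `v*`, is at most `m` strictly above `v*`, and the
ascending-price-auction revenue `R* = v* · m` is at most the total budget of the bidders
whose values are at least `v*`. -/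
theorem vstar_properties
    (n : ℕ) (hn : 1 ≤ n) (m : ℝ) (hm : 0 < m)
    (v b : ℕ → ℝ)
    (hpos : ∀ i ∈ Finset.Icc 1 n, 0 < v i ∧ 0 < b i)
    (hsort : ∀ i ∈ Finset.Icc 1 n, ∀ j ∈ Finset.Icc 1 n, i ≤ j → v j ≤ v i)
    (hdummy : m * v n ≤ b n) :
    (∀ p : ℝ, 0 < p → p < vstar v b n m → m < DAPA v b n p) ∧
      (∀ p : ℝ, vstar v b n m < p → DAPA v b n p ≤ m) ∧
      vstar v b n m * m ≤
        ∑ i ∈ (Finset.Icc 1 n).filter fun i => vstar v b n m ≤ v i, b i := by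
  have hb0 : ∀ i ∈ Finset.Icc 1 n, 0 ≤ b i := fun i hi => (hpos i hi).2.le
  have hNmono : ∀ p q : ℝ, p ≤ q →
      (∑ i ∈ (Finset.Icc 1 n).filter fun i => q ≤ v i, b i)
      ≤ (∑ i ∈ (Finset.Icc 1 n).filter fun i => p ≤ v i, b i) := by
    intro p q hpq
    apply Finset.sum_le_sum_of_subset_of_nonneg
    · intro i hi
      rw [Finset.mem_filter] at hi ⊢
      exact ⟨hi.1, le_trans hpq hi.2⟩
    · intro i hi _
      exact hb0 i (Finset.mem_filter.mp hi).1
  have hanti : ∀ p q : ℝ, 0 < p → p ≤ q → DAPA v b n q ≤ DAPA v b n p := by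
    intro p q hp hpq
    unfold DAPA
    exact div_le_div₀
      (Finset.sum_nonneg fun i hi => hb0 i (Finset.mem_filter.mp hi).1)
      (hNmono p q hpq) hp hpq
  have hSne : Set.Nonempty {p : ℝ | 0 < p ∧ DAPA v b n p ≤ m} := by
    refine ⟨max (v 1) 0 + 1, ?_, ?_⟩
    · have := le_max_right (v 1) 0; linarith
    · have hempty : (Finset.Icc 1 n).filter (fun i => max (v 1) 0 + 1 ≤ v i) = ∅ := by
        rw [Finset.filter_eq_empty_iff]
        intro i hi
        have h1 : (1 : ℕ) ∈ Finset.Icc 1 n := Finset.mem_Icc.mpr ⟨le_refl 1, hn⟩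
        have h2 := hsort 1 h1 i hi (Finset.mem_Icc.mp hi).1
        have h3 := le_max_left (v 1) 0
        intro hc; linarith
      unfold DAPA
      rw [hempty]
      simp
      exact hm.le
  have hbdd : BddBelow {p : ℝ | 0 < p ∧ DAPA v b n p ≤ m} :=
    ⟨0, fun x hx => hx.1.le⟩
  have part1 : ∀ p : ℝ, 0 < p → p < vstar v b n m → m < DAPA v b n p := by
    intro p hp hpw
    by_contra h
    push_neg at h
    have : vstar v b n m ≤ p := csInf_le hbdd ⟨hp, h⟩
    linarith
  have part2 : ∀ p : ℝ, vstar v b n m < p → DAPA v b n p ≤ m := by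
    intro p hwp
    obtain ⟨q, hq, hqp⟩ := (csInf_lt_iff hbdd hSne).mp hwp
    exact le_trans (hanti q p hq.1 hqp.le) hq.2
  refine ⟨part1, part2, ?_⟩
  set w := vstar v b n m with hwdef
  by_contra h
  push_neg at h
  set N := ∑ i ∈ (Finset.Icc 1 n).filter fun i => w ≤ v i, b i with hNdef
  have hN0 : 0 ≤ N :=
    Finset.sum_nonneg fun i hi => hb0 i (Finset.mem_filter.mp hi).1
  have hw0 : 0 < w := by nlinarith
  have hNmw : N / m < w := (div_lt_iff₀ hm).mpr (by nlinarith)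
  set F := (Finset.Icc 1 n).filter (fun i => v i < w) with hFdef
  set S0 := insert (N / m) (F.image v) with hS0def
  have hS0ne : S0.Nonempty := Finset.insert_nonempty _ _
  have hLlt : S0.max' hS0ne < w := by
    rw [Finset.max'_lt_iff]
    intro x hx
    rcases Finset.mem_insert.mp hx with h1 | h2
    · rw [h1]; exact hNmw
    · obtain ⟨i, hi, rfl⟩ := Finset.mem_image.mp h2
      exact (Finset.mem_filter.mp hi).2
  obtain ⟨p, hLp, hpw⟩ := exists_between hLlt
  have hNmle : N / m ≤ S0.max' hS0ne :=
    Finset.le_max' _ _ (Finset.mem_insert_self _ _)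
  have hp0 : 0 < p := lt_of_le_of_lt (by positivity) (lt_of_le_of_lt hNmle hLp)
  have hDp := part1 p hp0 hpw
  have hNp : m * p < ∑ i ∈ (Finset.Icc 1 n).filter (fun i => p ≤ v i), b i := by
    unfold DAPA at hDp
    exact (lt_div_iff₀ hp0).mp hDp
  have hsub : (Finset.Icc 1 n).filter (fun i => p ≤ v i)
      ⊆ (Finset.Icc 1 n).filter (fun i => w ≤ v i) := by
    intro i hi
    rw [Finset.mem_filter] at hi ⊢
    refine ⟨hi.1, ?_⟩
    by_contra hlt
    push_neg at hlt
    have hiF : i ∈ F := Finset.mem_filter.mpr ⟨hi.1, hlt⟩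
    have : v i ≤ S0.max' hS0ne :=
      Finset.le_max' _ _ (Finset.mem_insert.mpr (Or.inr (Finset.mem_image_of_mem v hiF)))
    linarith [hi.2]
  have hNle : (∑ i ∈ (Finset.Icc 1 n).filter (fun i => p ≤ v i), b i) ≤ N :=
    Finset.sum_le_sum_of_subset_of_nonneg hsub
      (fun i hi _ => hb0 i (Finset.mem_filter.mp hi).1)
  have hNlt : N < m * p := by
    have := lt_of_le_of_lt hNmle hLp
    rw [div_lt_iff₀ hm] at this
    linarith
  linarith
end

section
/- Expensive prefix of the Sort-Cut price schedule: let x* be a clearing breakpoint of the Sort-Cut mechanism with cut index k, let ρ > 0 be a price threshold, and suppose the price schedule contains at least T ≥ 0 dollars at unit prices at least ρ, i.e., b'_k·[w_k ≥ ρ] + Σ_{j > k : w_j ≥ ρ} b_j ≥ T. Then every winner i < k whose average per-unit payment is less than ρ (i.e., p_i < ρ·y_i) has budget b_i > T. -/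
open Finset

/-- expensive prefix of the Sort-Cut price schedule.  If the schedule
contains at least `T ≥ 0` dollars at unit prices at least `ρ`, then every winner strictly
above the cut whose average per-unit payment is below `ρ` must have budget exceeding
`T`. -/
theorem sortcut_expensive_prefix
    (n : ℕ) (m : ℝ) (w b : ℕ → ℝ) (hV : ValidProfile w b n m)
    (x : ℝ) (hx : IsClearing w b n m x)
    (ρ T : ℝ) (hρ : 0 < ρ) (hT : 0 ≤ T)
    (hprefix :
      T ≤ (if ρ ≤ w (cutIndex b n x) then prefixSum b (cutIndex b n x) - x else 0) +
        ∑ j ∈ (Finset.Icc (cutIndex b n x + 1) n).filter fun j => ρ ≤ w j, b j)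
    (i : ℕ) (hi : i ∈ Finset.Icc 1 n) (hik : i < cutIndex b n x)
    (hcheap : pay b n x i < ρ * alloc w b n x i) :
    T < b i := by
  classical
  obtain ⟨hn, hm, hpos, hsort, hlast⟩ := hV
  have hx0 : (0:ℝ) ≤ x := hx.1
  have hxn : x ≤ prefixSum b n := hx.2.1
  have hi1 : 1 ≤ i := (Finset.mem_Icc.mp hi).1
  have hin : i ≤ n := (Finset.mem_Icc.mp hi).2
  set k := cutIndex b n x with hkdef
  have hk1 : 1 ≤ k := le_trans hi1 (le_of_lt hik)
  have hkn : k ≤ n := Nat.findGreatest_le n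
  have hbi : 0 < b i := (hpos i hi).2
  have hP0 : prefixSum b 0 = 0 := by simp [prefixSum]
  have hPmono : ∀ a c : ℕ, a ≤ c → c ≤ n → prefixSum b a ≤ prefixSum b c := by
    intro a c hac hcn
    apply Finset.sum_le_sum_of_subset_of_nonneg (Finset.Icc_subset_Icc_right hac)
    intro j hj _
    have hj' := Finset.mem_Icc.mp hj
    exact le_of_lt (hpos j (Finset.mem_Icc.mpr ⟨hj'.1, le_trans hj'.2 hcn⟩)).2
  have hspec : 1 ≤ k ∧ prefixSum b (k-1) ≤ x := by
    rw [hkdef]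
    exact Nat.findGreatest_spec (P := fun k => 1 ≤ k ∧ prefixSum b (k-1) ≤ x)
      (m := 1) hn ⟨le_rfl, by simpa [hP0] using hx0⟩
  have hPx : x ≤ prefixSum b k := by
    rcases eq_or_lt_of_le hkn with h | h
    · rwa [h]
    · by_contra hcon
      push_neg at hcon
      have hng := Nat.findGreatest_is_greatest (P := fun k => 1 ≤ k ∧ prefixSum b (k-1) ≤ x)
        (by omega : cutIndex b n x < k + 1) (by omega : k + 1 ≤ n)
      exact hng ⟨by omega, by simpa using le_of_lt hcon⟩
  -- price at cut below ρ: trivial case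
  by_cases hwk : ρ ≤ w k
  swap
  · have hfe : (Finset.Icc (k+1) n).filter (fun j => ρ ≤ w j) = ∅ := by
      apply Finset.filter_false_of_mem
      intro j hj
      have hj' := Finset.mem_Icc.mp hj
      have : w j ≤ w k := hsort k (Finset.mem_Icc.mpr ⟨hk1, hkn⟩) j
        (Finset.mem_Icc.mpr ⟨by omega, hj'.2⟩) (by omega)
      push_neg at hwk
      intro hc; linarith
    rw [if_neg hwk, hfe, Finset.sum_empty] at hprefix
    have : T = 0 := le_antisymm (by linarith) hT
    linarith
  -- main case
  rw [if_pos hwk] at hprefix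
  by_contra hTb
  push_neg at hTb
  set M : ℕ → ℝ := fun j => max (prefixSum b j - x) 0 with hMdef
  set g : ℕ → ℝ := fun j => min (b i) (M j) with hgdef
  have hMmono : ∀ a c : ℕ, a ≤ c → c ≤ n → M a ≤ M c := by
    intro a c hac hcn
    exact max_le_max (by linarith [hPmono a c hac hcn]) le_rfl
  have hqty : qty w b n x (b i) = ∑ j ∈ Finset.Icc 1 n, (g j - g (j-1)) / w j := rfl
  -- key per-term bound
  have hterm : ∀ j ∈ Finset.Icc 1 n, ρ * ((g j - g (j-1)) / w j) ≤ g j - g (j-1) := by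
    intro j hj
    have hj' := Finset.mem_Icc.mp hj
    have hwj : 0 < w j := (hpos j hj).1
    have hgm : g (j-1) ≤ g j :=
      min_le_min le_rfl (hMmono (j-1) j (by omega) hj'.2)
    by_cases hρj : ρ ≤ w j
    · rw [mul_div_assoc', div_le_iff₀ hwj]
      nlinarith
    · -- j > k, and b i fits in the expensive prefix ending before j
      have hkj : k + 1 ≤ j := by
        by_contra hc
        push_neg at hc
        have : w k ≤ w j := hsort j hj k (Finset.mem_Icc.mpr ⟨hk1, hkn⟩) (by omega)
        push_neg at hρj
        linarith
      have hsub : (Finset.Icc (k+1) n).filter (fun l => ρ ≤ w l) ⊆ Finset.Icc (k+1) (j-1) := by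
        intro l hl
        have hl' := Finset.mem_filter.mp hl
        have hl'' := Finset.mem_Icc.mp hl'.1
        refine Finset.mem_Icc.mpr ⟨hl''.1, ?_⟩
        by_contra hc
        push_neg at hc
        have : w l ≤ w j := hsort j hj l (Finset.mem_Icc.mpr ⟨by omega, hl''.2⟩) (by omega)
        push_neg at hρj
        linarith [hl'.2]
      have hsum : (∑ l ∈ (Finset.Icc (k+1) n).filter (fun l => ρ ≤ w l), b l)
          ≤ ∑ l ∈ Finset.Icc (k+1) (j-1), b l := by
        apply Finset.sum_le_sum_of_subset_of_nonneg hsub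
        intro l hl _
        have hl' := Finset.mem_Icc.mp hl
        exact le_of_lt (hpos l (Finset.mem_Icc.mpr ⟨by omega, by omega⟩)).2
      have hsplit : prefixSum b k + ∑ l ∈ Finset.Icc (k+1) (j-1), b l = prefixSum b (j-1) := by
        have h1 : Finset.Icc 1 k = Finset.Ioc 0 k := by rw [← Finset.Icc_add_one_left_eq_Ioc]; rfl
        have h2 : Finset.Icc (k+1) (j-1) = Finset.Ioc k (j-1) := by rw [← Finset.Icc_add_one_left_eq_Ioc]
        have h3 : Finset.Icc 1 (j-1) = Finset.Ioc 0 (j-1) := by rw [← Finset.Icc_add_one_left_eq_Ioc]; rfl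
        rw [prefixSum, prefixSum, h1, h2, h3]
        exact Finset.sum_Ioc_consecutive b (by omega) (by omega)
      have hbfit : b i ≤ M (j-1) := by
        have : b i ≤ prefixSum b (j-1) - x := by linarith [hsum, hprefix, hTb]
        exact le_trans this (le_max_left _ _)
      have hg1 : g (j-1) = b i := min_eq_left hbfit
      have hg2 : g j = b i :=
        min_eq_left (le_trans hbfit (hMmono (j-1) j (by omega) hj'.2))
      rw [hg1, hg2]
      simp
  -- telescoping
  have htel : ∀ N : ℕ, ∑ j ∈ Finset.Icc 1 N, (g j - g (j-1)) = g N - g 0 := by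
    intro N
    induction N with
    | zero => simp
    | succ N ih =>
      rw [Finset.sum_Icc_succ_top (Nat.one_le_iff_ne_zero.mpr (Nat.succ_ne_zero N)), ih]
      simp only [Nat.add_sub_cancel]
      ring
  have hg0 : g 0 = 0 := by
    simp [hgdef, hMdef, hP0, min_eq_right, max_eq_right, hx0, hbi.le]
  have hgn : g n ≤ b i := min_le_left _ _
  have hq : ρ * qty w b n x (b i) ≤ b i := by
    rw [hqty, Finset.mul_sum]
    calc ∑ j ∈ Finset.Icc 1 n, ρ * ((g j - g (j-1)) / w j)
        ≤ ∑ j ∈ Finset.Icc 1 n, (g j - g (j-1)) := Finset.sum_le_sum hterm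
      _ = g n - g 0 := htel n
      _ ≤ b i := by rw [hg0]; linarith
  rw [pay, if_pos hik, alloc, if_pos hik] at hcheap
  linarith
end

section
/- Tightness of the R* − b_max bound: consider a single bidder with true per-unit value v > 0 and m > 0 divisible units for sale. Let a mechanism be given by functions x, p : (0, ∞) → ℝ assigning to each reported budget β > 0 an allocation x(β) and a payment p(β) with 0 ≤ p(β) ≤ β. Suppose (i) the mechanism always sells all units, x(β) = m for every β > 0 (as Pareto optimality requires with a single bidder), and (ii) truthful budget reporting is weakly dominant: for every true budget b > 0 and every report β > 0 with p(β) ≤ b, one has m·v − p(b) ≥ m·v − p(β). Then p(b) = 0 for every b > 0; in particular, no Pareto-optimal budget-truthful mechanism can extract positive revenue from a single bidder. -/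
open Finset

/-- tightness of the `R* - b_max` bound.  For a single bidder, any
mechanism that always sells all `m` units within the reported budget and for which
truthful budget reporting is weakly dominant must always charge zero; in particular no
Pareto-optimal budget-truthful mechanism extracts positive revenue from a single
bidder. -/
theorem single_bidder_budget_truthful_no_revenue
    (v m : ℝ) (hv : 0 < v) (hm : 0 < m)
    (x p : ℝ → ℝ)
    (hfeas : ∀ β : ℝ, 0 < β → 0 ≤ p β ∧ p β ≤ β)
    (hall : ∀ β : ℝ, 0 < β → x β = m)
    (htruth : ∀ b : ℝ, 0 < b → ∀ β : ℝ, 0 < β → p β ≤ b →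
      m * v - p β ≤ m * v - p b) :
    ∀ b : ℝ, 0 < b → p b = 0 := by
  intro b hb
  by_contra h
  have h0 := (hfeas b hb).1
  have hpos : 0 < p b := lt_of_le_of_ne h0 (Ne.symm h)
  have hε : 0 < p b / 2 := by linarith
  have hfe := hfeas (p b / 2) hε
  have := htruth b hb (p b / 2) hε (by linarith [(hfeas b hb).2])
  linarith
end
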